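/- arXiv:0812.0372 — 4 statements merged into one kernel-verified Lean document; each statement's English description precedes it below -/
import Mathlib

section
/- Let c ≥ 2, p = (c³ + 8c² + 19c + 6)(c+1), and D ≥ p. Let G be a finite simple graph with maximum degree at most D that contains no clique on D+1 vertices, and let D = α_1 + ... + α_{c+1} where each α_i equals ⌊D/(c+1)⌋ or ⌈D/(c+1)⌉. Let g be a coloring of V(G) with colors {1,…,c+1} minimizing Φ, let Υ be the set of vertices whose neighborhoods contain fewer than c−1 distinct colors under g, and let θ_i ⊆ Υ be a set of vertices each of which is adjacent to at least ⌈p/(c−1)⌉ vertices of color i. Then for every vertex v of color i, d_{H_i}(v) + d_{θ_i}(v)/(c+2) ≤ α_i, where d_{H_i}(v) is the number of neighbors of v having color i and d_{θ_i}(v) is the number of neighbors of v lying in θ_i. -/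
open scoped Classical

/-- The number of edges of `G` both of whose endpoints have color `i` under `ξ`. -/
noncomputable def monoEdges {V : Type*} [Fintype V] [DecidableEq V] (G : SimpleGraph V)
    [DecidableRel G.Adj] {k : ℕ} (ξ : V → Fin k) (i : Fin k) : ℕ :=
  (G.edgeFinset.filter fun e => ∀ v ∈ e, ξ v = i).card

/-- `Φ(ξ) = Σ_i f_i(ξ)/α_i` as a rational number. -/
noncomputable def Phi {V : Type*} [Fintype V] [DecidableEq V] (G : SimpleGraph V)
    [DecidableRel G.Adj] {k : ℕ} (α : Fin k → ℕ) (ξ : V → Fin k) : ℚ :=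
  ∑ i, (monoEdges G ξ i : ℚ) / (α i : ℚ)

section Aux

variable {V : Type*} [Fintype V] [DecidableEq V] (G : SimpleGraph V) [DecidableRel G.Adj] {k : ℕ}

lemma aux_mono_mem_iff (ξ : V → Fin k) (m : Fin k) {x y : V} (hxy : G.Adj x y) :
    s(x,y) ∈ G.edgeFinset.filter (fun e => ∀ z ∈ e, ξ z = m) ↔ ξ x = m ∧ ξ y = m := by
  simp only [Finset.mem_filter, SimpleGraph.mem_edgeFinset, SimpleGraph.mem_edgeSet, hxy,
    true_and]
  constructor
  · intro h; exact ⟨h x (by simp), h y (by simp)⟩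
  · rintro ⟨h1, h2⟩ z hz
    rcases Sym2.mem_iff.mp hz with rfl | rfl <;> assumption

lemma aux_mono_elim (ξ : V → Fin k) (m : Fin k) {e : Sym2 V}
    (he : e ∈ G.edgeFinset.filter (fun e => ∀ z ∈ e, ξ z = m)) :
    ∃ x y, G.Adj x y ∧ ξ x = m ∧ ξ y = m ∧ e = s(x,y) := by
  induction e using Sym2.ind with
  | _ x y =>
    obtain ⟨he1, he2⟩ := Finset.mem_filter.mp he
    rw [SimpleGraph.mem_edgeFinset, SimpleGraph.mem_edgeSet] at he1
    exact ⟨x, y, he1, he2 x (by simp), he2 y (by simp), rfl⟩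

lemma aux_mono_card_le (g ψ : V → Fin k) (m : Fin k)
    (h : ∀ x y, G.Adj x y → ψ x = m → ψ y = m → g x = m ∧ g y = m) :
    monoEdges G ψ m ≤ monoEdges G g m := by
  apply Finset.card_le_card
  intro e he
  obtain ⟨x, y, hxy, hx, hy, rfl⟩ := aux_mono_elim G ψ m he
  exact (aux_mono_mem_iff G g m hxy).mpr (h x y hxy hx hy)

lemma aux_mono_card_add_le (g ψ : V → Fin k) (a : Fin k) (w : V) (hw : g w = a)
    (h : ∀ x y, G.Adj x y → ψ x = a → ψ y = a → (g x = a ∧ g y = a ∧ x ≠ w ∧ y ≠ w)) :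
    monoEdges G ψ a + ((G.neighborFinset w).filter (fun y => g y = a)).card
      ≤ monoEdges G g a := by
  classical
  set S := G.edgeFinset.filter (fun e => ∀ z ∈ e, g z = a) with hS
  set T := (G.neighborFinset w).filter (fun y => g y = a) with hT
  set E := T.image (fun y => s(w,y)) with hE
  have hES : E ⊆ S := by
    intro e he
    obtain ⟨y, hy, rfl⟩ := Finset.mem_image.mp he
    obtain ⟨hy1, hy2⟩ := Finset.mem_filter.mp hy
    rw [SimpleGraph.mem_neighborFinset] at hy1
    exact (aux_mono_mem_iff G g a hy1).mpr ⟨hw, hy2⟩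
  have hcardE : E.card = T.card := by
    apply Finset.card_image_of_injOn
    intro y1 _ y2 _ hy
    exact Sym2.congr_right.mp hy
  have hsub : (G.edgeFinset.filter (fun e => ∀ z ∈ e, ψ z = a)) ⊆ S \ E := by
    intro e he
    obtain ⟨x, y, hxy, hx, hy, rfl⟩ := aux_mono_elim G ψ a he
    obtain ⟨hgx, hgy, hxw, hyw⟩ := h x y hxy hx hy
    rw [Finset.mem_sdiff]
    refine ⟨(aux_mono_mem_iff G g a hxy).mpr ⟨hgx, hgy⟩, ?_⟩
    intro hmem
    obtain ⟨y', _, hy'⟩ := Finset.mem_image.mp hmem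
    rcases Sym2.eq_iff.mp hy' with ⟨h1, _⟩ | ⟨h1, _⟩
    · exact hxw h1.symm
    · exact hyw h1.symm
  have h1 : monoEdges G ψ a ≤ (S \ E).card := Finset.card_le_card hsub
  rw [Finset.card_sdiff_of_subset hES, hcardE] at h1
  have h2 : E.card ≤ S.card := Finset.card_le_card hES
  rw [hcardE] at h2
  have : monoEdges G g a = S.card := rfl
  omega

lemma aux_mono_card_le_add (g ψ : V → Fin k) (b : Fin k) (w : V) (T : Finset V)
    (h : ∀ x y, G.Adj x y → ψ x = b → ψ y = b →
      (g x = b ∧ g y = b) ∨ (x = w ∧ y ∈ T) ∨ (y = w ∧ x ∈ T)) :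
    monoEdges G ψ b ≤ monoEdges G g b + T.card := by
  classical
  have hsub : (G.edgeFinset.filter (fun e => ∀ z ∈ e, ψ z = b)) ⊆
      (G.edgeFinset.filter (fun e => ∀ z ∈ e, g z = b)) ∪ T.image (fun y => s(w,y)) := by
    intro e he
    obtain ⟨x, y, hxy, hx, hy, rfl⟩ := aux_mono_elim G ψ b he
    rcases h x y hxy hx hy with ⟨h1, h2⟩ | ⟨rfl, h2⟩ | ⟨rfl, h2⟩
    · exact Finset.mem_union_left _ ((aux_mono_mem_iff G g b hxy).mpr ⟨h1, h2⟩)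
    · exact Finset.mem_union_right _ (Finset.mem_image.mpr ⟨y, h2, rfl⟩)
    · exact Finset.mem_union_right _ (Finset.mem_image.mpr ⟨x, h2, Sym2.eq_swap⟩)
  have h1 := Finset.card_le_card hsub
  have h2 := Finset.card_union_le (G.edgeFinset.filter (fun e => ∀ z ∈ e, g z = b))
    (T.image (fun y => s(w,y)))
  have h3 : (T.image (fun y => s(w,y))).card ≤ T.card := Finset.card_image_le
  have e1 : monoEdges G ψ b = (G.edgeFinset.filter (fun e => ∀ z ∈ e, ψ z = b)).card := rfl
  have e2 : monoEdges G g b = (G.edgeFinset.filter (fun e => ∀ z ∈ e, g z = b)).card := rfl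
  omega

lemma aux_phi_diff (α : Fin k → ℕ) (hα : ∀ m, 0 < α m) (g ψ : V → Fin k) (a b : Fin k)
    (hab : a ≠ b) (da db : ℕ)
    (hda : monoEdges G ψ a + da ≤ monoEdges G g a)
    (hdb : monoEdges G ψ b ≤ monoEdges G g b + db)
    (hother : ∀ m, m ≠ a → m ≠ b → monoEdges G ψ m ≤ monoEdges G g m) :
    Phi G α ψ ≤ Phi G α g - (da : ℚ) / (α a : ℚ) + (db : ℚ) / (α b : ℚ) := by
  have hq : ∀ m, (0:ℚ) < (α m : ℚ) := fun m => by exact_mod_cast hα m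
  have step : Phi G α ψ ≤ ∑ m, ((monoEdges G g m : ℚ) / (α m : ℚ) +
      ((if m = a then -((da : ℚ) / (α a : ℚ)) else 0) +
       (if m = b then (db : ℚ) / (α b : ℚ) else 0))) := by
    apply Finset.sum_le_sum
    intro m _
    by_cases hma : m = a
    · subst hma
      rw [if_pos rfl, if_neg hab]
      have h1 : (monoEdges G ψ m : ℚ) ≤ (monoEdges G g m : ℚ) - da := by
        have : (monoEdges G ψ m : ℚ) + da ≤ monoEdges G g m := by exact_mod_cast hda
        linarith
      have heq : (monoEdges G g m : ℚ) / (α m : ℚ) + (-((da : ℚ) / (α m : ℚ)) + 0)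
          = ((monoEdges G g m : ℚ) - da) / (α m : ℚ) := by ring
      rw [heq]
      gcongr
    · by_cases hmb : m = b
      · subst hmb
        rw [if_neg hma, if_pos rfl]
        have h1 : (monoEdges G ψ m : ℚ) ≤ (monoEdges G g m : ℚ) + db := by exact_mod_cast hdb
        have heq : (monoEdges G g m : ℚ) / (α m : ℚ) + (0 + (db : ℚ) / (α m : ℚ))
            = ((monoEdges G g m : ℚ) + db) / (α m : ℚ) := by ring
        rw [heq]
        gcongr
      · rw [if_neg hma, if_neg hmb]
        have h1 : (monoEdges G ψ m : ℚ) ≤ (monoEdges G g m : ℚ) := by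
          exact_mod_cast hother m hma hmb
        simp only [add_zero]
        gcongr
  refine step.trans (le_of_eq ?_)
  rw [Finset.sum_add_distrib, Finset.sum_add_distrib]
  simp only [Finset.sum_ite_eq', Finset.mem_univ, if_pos]
  rw [Phi]
  ring

end Aux

/-- **Proposition 6.** Let `c ≥ 2`, `p = (c³+8c²+19c+6)(c+1)` and `D ≥ p`.
Let `G` have maximum degree at most `D` and no clique on `D+1` vertices, let
`D = α_1 + ⋯ + α_{c+1}` with each `α_i ∈ {⌊D/(c+1)⌋, ⌈D/(c+1)⌉}`, and let `g` minimize `Φ`.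
Let `Υ` be the set of vertices seeing fewer than `c−1` colors among their neighbors, and let
`θ_i ⊆ Υ` consist of vertices each adjacent to at least `⌈p/(c−1)⌉` vertices of color `i`.
Then every vertex `v` of color `i` satisfies `d_{H_i}(v) + d_{θ_i}(v)/(c+2) ≤ α_i`. -/
theorem phi_minimizer_color_degree_bound {V : Type*} [Fintype V] [DecidableEq V]
    (G : SimpleGraph V) [DecidableRel G.Adj] (c D : ℕ) (hc : 2 ≤ c)
    (hD : (c ^ 3 + 8 * c ^ 2 + 19 * c + 6) * (c + 1) ≤ D)
    (hdeg : ∀ v : V, G.degree v ≤ D) (hfree : G.CliqueFree (D + 1))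
    (α : Fin (c + 1) → ℕ)
    (hα : ∀ i, α i = D / (c + 1) ∨ α i = (D + c) / (c + 1))
    (hsum : ∑ i, α i = D)
    (g : V → Fin (c + 1)) (hmin : ∀ ψ : V → Fin (c + 1), Phi G α g ≤ Phi G α ψ)
    (i : Fin (c + 1)) (θ : Finset V)
    (hθΥ : ∀ u ∈ θ, ((G.neighborFinset u).image g).card < c - 1)
    (hθadj : ∀ u ∈ θ,
      ⌈(((c ^ 3 + 8 * c ^ 2 + 19 * c + 6) * (c + 1) : ℕ) : ℚ) / ((c : ℚ) - 1)⌉ ≤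
        ((((G.neighborFinset u).filter fun x => g x = i).card : ℤ)))
    (v : V) (hv : g v = i) :
    ((((G.neighborFinset v).filter fun u => g u = i).card : ℚ)) +
      (((G.neighborFinset v ∩ θ).card : ℚ)) / ((c : ℚ) + 2) ≤ (α i : ℚ) := by
  classical
  -- numeric facts about α
  have hq1 : c ^ 3 + 8 * c ^ 2 + 19 * c + 6 ≤ D / (c + 1) := by
    have h : (c ^ 3 + 8 * c ^ 2 + 19 * c + 6) * (c + 1) / (c + 1) ≤ D / (c + 1) :=
      Nat.div_le_div_right hD
    rwa [Nat.mul_div_cancel _ (by omega : 0 < c + 1)] at h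
  have hqα : ∀ m, D / (c + 1) ≤ α m := by
    intro m
    rcases hα m with h | h
    · omega
    · rw [h]; exact Nat.div_le_div_right (by omega)
  have hclb : ∀ m, c ^ 3 + 8 * c ^ 2 + 19 * c + 6 ≤ α m := fun m => le_trans hq1 (hqα m)
  have hcle : c ≤ c ^ 3 + 8 * c ^ 2 + 19 * c + 6 := by nlinarith
  have hα0 : ∀ m, 0 < α m := fun m => by have := hclb m; omega
  have hαq : ∀ m, (0:ℚ) < (α m : ℚ) := fun m => by exact_mod_cast hα0 m
  have hDα : D ≤ (c + 2) * α i := by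
    have h1 := Nat.div_add_mod D (c + 1)
    have h2 : D % (c + 1) < c + 1 := Nat.mod_lt _ (by omega)
    have hcq : c ≤ D / (c + 1) := le_trans hcle hq1
    calc D = (c + 1) * (D / (c + 1)) + D % (c + 1) := h1.symm
      _ ≤ (c + 1) * (D / (c + 1)) + c := by omega
      _ ≤ (c + 1) * (D / (c + 1)) + D / (c + 1) := by omega
      _ = (c + 2) * (D / (c + 1)) := by ring
      _ ≤ (c + 2) * α i := Nat.mul_le_mul_left _ (hqα i)
  -- every θ-vertex has no neighbor of its own color
  have hzero : ∀ u ∈ θ, ((G.neighborFinset u).filter (fun x => g x = g u)).card = 0 := by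
    intro u hu
    by_cases hgu : g u ∈ (G.neighborFinset u).image g
    · -- recolor u to a missing color
      have hex : ∃ m : Fin (c + 1), m ∉ (G.neighborFinset u).image g := by
        by_contra h
        push_neg at h
        have h1 : (Finset.univ : Finset (Fin (c+1))).card ≤
            ((G.neighborFinset u).image g).card :=
          Finset.card_le_card (fun m _ => h m)
        have h2 := hθΥ u hu
        simp only [Finset.card_univ, Fintype.card_fin] at h1
        omega
      obtain ⟨m0, hm0⟩ := hex
      have hm0u : m0 ≠ g u := fun h => hm0 (h ▸ hgu)
      set ψ : V → Fin (c + 1) := Function.update g u m0 with hψ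
      have hψu : ψ u = m0 := Function.update_self u m0 g
      have hψx : ∀ x, x ≠ u → ψ x = g x := fun x hx => Function.update_of_ne hx m0 g
      have hda : monoEdges G ψ (g u) +
          ((G.neighborFinset u).filter (fun x => g x = g u)).card ≤ monoEdges G g (g u) := by
        apply aux_mono_card_add_le G g ψ (g u) u rfl
        intro x y hxy hx hy
        have hxu : x ≠ u := by
          intro h; subst h; rw [hψu] at hx; exact hm0u hx
        have hyu : y ≠ u := by
          intro h; subst h; rw [hψu] at hy; exact hm0u hy
        rw [hψx x hxu] at hx; rw [hψx y hyu] at hy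
        exact ⟨hx, hy, hxu, hyu⟩
      have hoth : ∀ m, m ≠ g u → monoEdges G ψ m ≤ monoEdges G g m := by
        intro m hm
        apply aux_mono_card_le G g ψ m
        intro x y hxy hx hy
        have hxu : x ≠ u := by
          intro h
          rw [h, hψu] at hx
          have hyu : y ≠ u := fun h2 => (G.ne_of_adj hxy) (h.trans h2.symm)
          rw [hψx y hyu] at hy
          have hadj : G.Adj u y := by rw [← h]; exact hxy
          exact hm0 (Finset.mem_image.mpr
            ⟨y, (SimpleGraph.mem_neighborFinset _ _ _).mpr hadj, hy.trans hx.symm⟩)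
        have hyu : y ≠ u := by
          intro h
          rw [h, hψu] at hy
          rw [hψx x hxu] at hx
          have hadj : G.Adj u x := by rw [← h]; exact hxy.symm
          exact hm0 (Finset.mem_image.mpr
            ⟨x, (SimpleGraph.mem_neighborFinset _ _ _).mpr hadj, hx.trans hy.symm⟩)
        rw [hψx x hxu] at hx; rw [hψx y hyu] at hy
        exact ⟨hx, hy⟩
      obtain ⟨b0, hb0⟩ : ∃ b0 : Fin (c + 1), b0 ≠ g u := by
        refine Fintype.exists_ne_of_one_lt_card ?_ (g u)
        simp only [Fintype.card_fin]; omega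
      have hphi := aux_phi_diff G α hα0 g ψ (g u) b0 (Ne.symm hb0)
        ((G.neighborFinset u).filter (fun x => g x = g u)).card 0 hda
        (by simpa using hoth b0 hb0) (fun m hm _ => hoth m hm)
      have hmono := hmin ψ
      simp only [Nat.cast_zero, zero_div, add_zero] at hphi
      have hle : (((G.neighborFinset u).filter (fun x => g x = g u)).card : ℚ)
          / (α (g u) : ℚ) ≤ 0 := by
        push_cast at hphi
        linarith
      have : (((G.neighborFinset u).filter (fun x => g x = g u)).card : ℚ) ≤ 0 := by
        by_contra h
        push_neg at h
        have := div_pos h (hαq (g u))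
        linarith
      exact_mod_cast le_antisymm (by exact_mod_cast this) (Nat.zero_le _)
    · rw [Finset.card_eq_zero, Finset.filter_eq_empty_iff]
      intro x hx hgx
      exact hgu (Finset.mem_image.mpr ⟨x, hx, hgx⟩)
  -- every θ-vertex has color ≠ i, and sees a color-i neighbor
  have hnoti : ∀ u ∈ θ, g u ≠ i := by
    intro u hu hgui
    have h1 := hθadj u hu
    have hp0 : (0:ℚ) < (((c ^ 3 + 8 * c ^ 2 + 19 * c + 6) * (c + 1) : ℕ) : ℚ) := by
      have : (0:ℕ) < (c ^ 3 + 8 * c ^ 2 + 19 * c + 6) * (c + 1) := by positivity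
      exact_mod_cast this
    have hc1 : (0:ℚ) < (c : ℚ) - 1 := by
      have : (2:ℚ) ≤ (c : ℚ) := by exact_mod_cast hc
      linarith
    have hceil : (0:ℤ) < ⌈(((c ^ 3 + 8 * c ^ 2 + 19 * c + 6) * (c + 1) : ℕ) : ℚ) /
        ((c : ℚ) - 1)⌉ := Int.ceil_pos.mpr (div_pos hp0 hc1)
    have h2 : (0:ℤ) < (((G.neighborFinset u).filter fun x => g x = i).card : ℤ) :=
      lt_of_lt_of_le hceil h1
    have h3 : 0 < ((G.neighborFinset u).filter fun x => g x = i).card := by exact_mod_cast h2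
    have h4 := hzero u hu
    rw [hgui] at h4
    omega
  -- abbreviations
  set NB := G.neighborFinset v with hNB
  have hkey : ∀ j : Fin (c + 1),
      ((NB.filter (fun y => g y = i)).card : ℚ) * (α j : ℚ) ≤
      (((NB.filter (fun y => g y = j)).card : ℚ) -
        ((NB.filter (fun u => u ∈ θ ∧ g u = j)).card : ℚ)) * (α i : ℚ) := by
    intro j
    by_cases hij : j = i
    · subst hij
      have hs0 : (NB.filter (fun u => u ∈ θ ∧ g u = j)).card = 0 := by
        rw [Finset.card_eq_zero, Finset.filter_eq_empty_iff]
        rintro x _ ⟨hxθ, hxj⟩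
        exact hnoti x hxθ hxj
      rw [hs0]
      push_cast
      ring_nf
      exact le_refl _
    · -- the main recoloring
      set Sj := NB.filter (fun u => u ∈ θ ∧ g u = j) with hSj
      set Aj := NB.filter (fun y => g y = j) with hAj
      have hSA : Sj ⊆ Aj := by
        intro u hu
        obtain ⟨h1, _, h3⟩ := Finset.mem_filter.mp hu
        exact Finset.mem_filter.mpr ⟨h1, h3⟩
      have hSθ : ∀ u ∈ Sj, u ∈ θ := fun u hu => (Finset.mem_filter.mp hu).2.1
      have hSg : ∀ u ∈ Sj, g u = j := fun u hu => (Finset.mem_filter.mp hu).2.2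
      have htgt : ∀ u ∈ Sj, ∃ m : Fin (c + 1),
          m ∉ (G.neighborFinset u).image g ∧ m ≠ i ∧ m ≠ j := by
        intro u hu
        by_contra h
        push_neg at h
        have hsub : (Finset.univ : Finset (Fin (c+1))) ⊆
            ((G.neighborFinset u).image g) ∪ {i, j} := by
          intro m _
          by_cases h1 : m ∈ (G.neighborFinset u).image g
          · exact Finset.mem_union_left _ h1
          · by_cases hmi : m = i
            · subst hmi; exact Finset.mem_union_right _ (by simp)
            · have hmj := h m h1 hmi
              subst hmj; exact Finset.mem_union_right _ (by simp)
        have h1 := Finset.card_le_card hsub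
        have h2 := Finset.card_union_le ((G.neighborFinset u).image g) ({i, j} : Finset (Fin (c+1)))
        have h3 : ({i, j} : Finset (Fin (c+1))).card ≤ 2 := Finset.card_insert_le _ _ |>.trans (by simp)
        have h4 := hθΥ u (hSθ u hu)
        simp only [Finset.card_univ, Fintype.card_fin] at h1
        omega
      set tgt : V → Fin (c + 1) := fun u =>
        if h : ∃ m : Fin (c + 1), m ∉ (G.neighborFinset u).image g ∧ m ≠ i ∧ m ≠ j
        then h.choose else i with htgtdef
      have htspec : ∀ u ∈ Sj, tgt u ∉ (G.neighborFinset u).image g ∧ tgt u ≠ i ∧ tgt u ≠ j := by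
        intro u hu
        rw [htgtdef]
        simp only
        rw [dif_pos (htgt u hu)]
        exact (htgt u hu).choose_spec
      have hvSj : v ∉ Sj := by
        intro h
        have := hSg v h
        rw [hv] at this
        exact hij this.symm
      set ψ : V → Fin (c + 1) := fun x => if x = v then j else if x ∈ Sj then tgt x else g x
        with hψdef
      have hψv : ψ v = j := by rw [hψdef]; simp
      have hψS : ∀ u ∈ Sj, ψ u = tgt u := by
        intro u hu
        have huv : u ≠ v := fun h => hvSj (h ▸ hu)
        rw [hψdef]
        simp [huv, hu]
      have hψO : ∀ x, x ≠ v → x ∉ Sj → ψ x = g x := by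
        intro x h1 h2
        rw [hψdef]
        simp [h1, h2]
      -- no neighbor of a Sj vertex has color j
      have hind : ∀ u ∈ Sj, ∀ y, G.Adj u y → g y ≠ j := by
        intro u hu y hadj hgy
        have h0 := hzero u (hSθ u hu)
        rw [hSg u hu] at h0
        have : y ∈ (G.neighborFinset u).filter (fun x => g x = j) :=
          Finset.mem_filter.mpr ⟨(SimpleGraph.mem_neighborFinset _ _ _).mpr hadj, hgy⟩
        rw [Finset.card_eq_zero] at h0
        rw [h0] at this
        exact absurd this (Finset.notMem_empty y)
      have hmissed : ∀ u ∈ Sj, ∀ y, G.Adj u y → g y ≠ tgt u := by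
        intro u hu y hadj hgy
        exact (htspec u hu).1 (Finset.mem_image.mpr
          ⟨y, (SimpleGraph.mem_neighborFinset _ _ _).mpr hadj, hgy⟩)
      -- classification of vertices under ψ
      have hclass : ∀ x, ψ x = j → x = v ∨ (x ≠ v ∧ x ∉ Sj ∧ g x = j) := by
        intro x hx
        by_cases h1 : x = v
        · exact Or.inl h1
        · right
          by_cases h2 : x ∈ Sj
          · rw [hψS x h2] at hx
            exact absurd hx (htspec x h2).2.2
          · rw [hψO x h1 h2] at hx
            exact ⟨h1, h2, hx⟩
      -- card bound at color i
      have hda : monoEdges G ψ i + (NB.filter (fun y => g y = i)).card ≤ monoEdges G g i := by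
        apply aux_mono_card_add_le G g ψ i v hv
        intro x y hxy hx hy
        have key : ∀ z, ψ z = i → z ≠ v ∧ z ∉ Sj ∧ g z = i := by
          intro z hz
          have hzv : z ≠ v := by
            intro h; subst h; rw [hψv] at hz; exact hij hz
          have hzS : z ∉ Sj := by
            intro h; rw [hψS z h] at hz; exact (htspec z h).2.1 hz
          rw [hψO z hzv hzS] at hz
          exact ⟨hzv, hzS, hz⟩
        obtain ⟨hxv, _, hgx⟩ := key x hx
        obtain ⟨hyv, _, hgy⟩ := key y hy
        exact ⟨hgx, hgy, hxv, hyv⟩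
      -- card bound at color j
      have hdb : monoEdges G ψ j ≤ monoEdges G g j + (Aj \ Sj).card := by
        apply aux_mono_card_le_add G g ψ j v (Aj \ Sj)
        intro x y hxy hx hy
        rcases hclass x hx with rfl | ⟨hxv, hxS, hgx⟩
        · rcases hclass y hy with rfl | ⟨hyv, hyS, hgy⟩
          · exact absurd rfl (G.ne_of_adj hxy)
          · right; left
            refine ⟨rfl, Finset.mem_sdiff.mpr ⟨Finset.mem_filter.mpr ⟨?_, hgy⟩, hyS⟩⟩
            rw [hNB]
            exact (SimpleGraph.mem_neighborFinset _ _ _).mpr hxy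
        · rcases hclass y hy with rfl | ⟨hyv, hyS, hgy⟩
          · right; right
            refine ⟨rfl, Finset.mem_sdiff.mpr ⟨Finset.mem_filter.mpr ⟨?_, hgx⟩, hxS⟩⟩
            rw [hNB]
            exact (SimpleGraph.mem_neighborFinset _ _ _).mpr hxy.symm
          · exact Or.inl ⟨hgx, hgy⟩
      -- card bound at other colors
      have hoth : ∀ m, m ≠ i → m ≠ j → monoEdges G ψ m ≤ monoEdges G g m := by
        intro m hmi hmj
        apply aux_mono_card_le G g ψ m
        intro x y hxy hx hy
        have key : ∀ z w, G.Adj z w → ψ z = m → ψ w = m → g z = m := by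
          intro z w hzw hz hw
          have hzv : z ≠ v := by
            intro h; subst h; rw [hψv] at hz; exact hmj hz.symm
          by_cases hzS : z ∈ Sj
          · exfalso
            rw [hψS z hzS] at hz
            have hwv : w ≠ v := by
              intro h; subst h; rw [hψv] at hw; exact hmj hw.symm
            by_cases hwS : w ∈ Sj
            · exact hind z hzS w hzw (hSg w hwS)
            · rw [hψO w hwv hwS] at hw
              exact hmissed z hzS w hzw (hw.trans hz.symm)
          · rw [hψO z hzv hzS] at hz
            exact hz
        exact ⟨key x y hxy hx hy, key y x hxy.symm hy hx⟩
      -- apply Phi comparison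
      have hphi := aux_phi_diff G α hα0 g ψ i j (Ne.symm hij)
        (NB.filter (fun y => g y = i)).card (Aj \ Sj).card hda hdb hoth
      have hmono := hmin ψ
      have hstep : ((NB.filter (fun y => g y = i)).card : ℚ) / (α i : ℚ) ≤
          ((Aj \ Sj).card : ℚ) / (α j : ℚ) := by linarith
      have hcard : ((Aj \ Sj).card : ℚ) = ((Aj.card : ℚ) - (Sj.card : ℚ)) := by
        rw [Finset.card_sdiff_of_subset hSA]
        have := Finset.card_le_card hSA
        push_cast [Nat.cast_sub this]
        ring
      rw [hcard] at hstep
      rw [div_le_div_iff₀ (hαq i) (hαq j)] at hstep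
      exact hstep
  -- sum the key inequality over all colors
  have hsum_dd : ∑ j, (NB.filter (fun y => g y = j)).card = G.degree v := by
    rw [← SimpleGraph.card_neighborFinset_eq_degree]
    exact (Finset.card_eq_sum_card_fiberwise (fun x _ => Finset.mem_univ (g x))).symm
  have hsum_s : ∑ j, (NB.filter (fun u => u ∈ θ ∧ g u = j)).card = (NB ∩ θ).card := by
    rw [← Finset.filter_mem_eq_inter]
    rw [Finset.card_eq_sum_card_fiberwise (f := g) (fun x _ => Finset.mem_univ (g x))]
    congr 1
    funext j
    rw [Finset.filter_filter]
  have hsummed : ((NB.filter (fun y => g y = i)).card : ℚ) * (D : ℚ) ≤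
      ((G.degree v : ℚ) - ((NB ∩ θ).card : ℚ)) * (α i : ℚ) := by
    have h := Finset.sum_le_sum (fun j (_ : j ∈ Finset.univ) => hkey j)
    rw [← Finset.mul_sum] at h
    have hαsum : ∑ j, (α j : ℚ) = (D : ℚ) := by exact_mod_cast congrArg (Nat.cast (R := ℚ)) hsum
    rw [hαsum] at h
    rw [← Finset.sum_mul, Finset.sum_sub_distrib] at h
    have e1 : ∑ j, ((NB.filter (fun y => g y = j)).card : ℚ) = (G.degree v : ℚ) := by
      rw [← hsum_dd]; push_cast; rfl
    have e2 : ∑ j, ((NB.filter (fun u => u ∈ θ ∧ g u = j)).card : ℚ) = ((NB ∩ θ).card : ℚ) := by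
      rw [← hsum_s]; push_cast; rfl
    rw [e1, e2] at h
    exact h
  -- final arithmetic
  have hdegD : (G.degree v : ℚ) ≤ (D : ℚ) := by exact_mod_cast hdeg v
  have hDq : (0:ℚ) < (D : ℚ) := by
    have : 0 < D := by
      have := hD
      have : 0 < (c ^ 3 + 8 * c ^ 2 + 19 * c + 6) * (c + 1) := by positivity
      omega
    exact_mod_cast this
  have hc2 : (0:ℚ) < (c : ℚ) + 2 := by positivity
  have hDαq : (D : ℚ) ≤ ((c : ℚ) + 2) * (α i : ℚ) := by exact_mod_cast hDα
  set d : ℚ := ((NB.filter (fun y => g y = i)).card : ℚ) with hd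
  set t : ℚ := ((NB ∩ θ).card : ℚ) with ht
  have ht0 : (0:ℚ) ≤ t := by rw [ht]; positivity
  have h1 : d * (D : ℚ) ≤ ((D : ℚ) - t) * (α i : ℚ) := by
    refine hsummed.trans ?_
    have : (G.degree v : ℚ) - t ≤ (D : ℚ) - t := by linarith
    exact mul_le_mul_of_nonneg_right this (le_of_lt (hαq i))
  have key2 : t / ((c : ℚ) + 2) * (D : ℚ) ≤ t * (α i : ℚ) := by
    rw [div_mul_eq_mul_div, div_le_iff₀ hc2]
    calc t * (D : ℚ) ≤ t * (((c : ℚ) + 2) * (α i : ℚ)) :=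
          mul_le_mul_of_nonneg_left hDαq ht0
      _ = t * (α i : ℚ) * ((c : ℚ) + 2) := by ring
  have hfinal : (d + t / ((c : ℚ) + 2)) * (D : ℚ) ≤ (α i : ℚ) * (D : ℚ) := by
    have expand : (d + t / ((c : ℚ) + 2)) * (D : ℚ)
        = d * (D : ℚ) + t / ((c : ℚ) + 2) * (D : ℚ) := by ring
    rw [expand]
    nlinarith [h1, key2]
  exact le_of_mul_le_mul_right hfinal hDq
end

section
/- Let p ≥ 2 and D ≥ 1 be integers. Let G be the bipartite graph whose first part is a set S₁ of (p−1)D + 1 elements and whose second part S₂ consists of all p-element subsets of S₁, where each vertex T ∈ S₂ is adjacent exactly to the p elements of T in S₁. Then for every coloring f of V(G) with D colors there exists a vertex of degree at least p all of whose neighbors receive the same color under f; in particular, G admits no (2,p)-nondegenerate proper coloring with D colors. -/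
/-- The bipartite graph whose first part is `α` and whose second part consists of all
`p`-element subsets of `α`, where a subset is adjacent exactly to its elements. -/
def samplingGraph (α : Type*) [DecidableEq α] (p : ℕ) :
    SimpleGraph (α ⊕ {T : Finset α // T.card = p}) where
  Adj x y :=
    match x, y with
    | Sum.inl a, Sum.inr T => a ∈ T.1
    | Sum.inr T, Sum.inl a => a ∈ T.1
    | _, _ => False
  symm := ⟨by rintro (a | T) (b | S) h <;> simp_all⟩
  loopless := ⟨by rintro (a | T) h <;> simp_all⟩

instance {α : Type*} [DecidableEq α] {p : ℕ} : DecidableRel (samplingGraph α p).Adj :=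
  fun x y =>
    match x, y with
    | Sum.inl a, Sum.inr T => inferInstanceAs (Decidable (a ∈ T.1))
    | Sum.inr T, Sum.inl a => inferInstanceAs (Decidable (a ∈ T.1))
    | Sum.inl _, Sum.inl _ => inferInstanceAs (Decidable False)
    | Sum.inr _, Sum.inr _ => inferInstanceAs (Decidable False)

lemma samplingGraph_neighborFinset {α : Type*} [Fintype α] [DecidableEq α] {p : ℕ}
    (T : {T : Finset α // T.card = p}) :
    (samplingGraph α p).neighborFinset (Sum.inr T) = T.1.image Sum.inl := by
  ext u
  cases u with
  | inl a =>
      rw [SimpleGraph.mem_neighborFinset]; simp [samplingGraph]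
  | inr S =>
      rw [SimpleGraph.mem_neighborFinset]; simp [samplingGraph]

lemma samplingGraph_degree_inr {α : Type*} [Fintype α] [DecidableEq α] {p : ℕ}
    (T : {T : Finset α // T.card = p}) :
    (samplingGraph α p).degree (Sum.inr T) = p := by
  rw [SimpleGraph.degree, samplingGraph_neighborFinset,
    Finset.card_image_of_injective _ Sum.inl_injective, T.2]

/-- **Remark 1.5, contrary instance.** Let `p ≥ 2`, `D ≥ 1`, and let the first
part `S₁` of the bipartite graph `samplingGraph` have `(p−1)·D + 1` elements. Then in every
coloring with `D` colors there is a vertex of degree at least `p` all of whose neighbors get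
the same color; in particular there is no `(2,p)`-nondegenerate proper `D`-coloring. -/
theorem samplingGraph_not_nondegenerate {α : Type*} [Fintype α] [DecidableEq α]
    (p D : ℕ) (hp : 2 ≤ p) (hD : 1 ≤ D)
    (hcard : Fintype.card α = (p - 1) * D + 1) :
    (∀ f : α ⊕ {T : Finset α // T.card = p} → Fin D,
      ∃ v, p ≤ (samplingGraph α p).degree v ∧
        ∀ u ∈ (samplingGraph α p).neighborFinset v,
          ∀ w ∈ (samplingGraph α p).neighborFinset v, f u = f w) ∧
    ¬ ∃ f : α ⊕ {T : Finset α // T.card = p} → Fin D,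
        (∀ u v, (samplingGraph α p).Adj u v → f u ≠ f v) ∧
        (∀ v, p ≤ (samplingGraph α p).degree v →
          2 ≤ (((samplingGraph α p).neighborFinset v).image f).card) := by
  have main : ∀ f : α ⊕ {T : Finset α // T.card = p} → Fin D,
      ∃ v, p ≤ (samplingGraph α p).degree v ∧
        ∀ u ∈ (samplingGraph α p).neighborFinset v,
          ∀ w ∈ (samplingGraph α p).neighborFinset v, f u = f w := by
    intro f
    -- pigeonhole on the first part
    have hlt : Fintype.card (Fin D) * (p - 1) < Fintype.card α := by
      rw [Fintype.card_fin, hcard, mul_comm]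
      omega
    obtain ⟨c, hc⟩ := Fintype.exists_lt_card_fiber_of_mul_lt_card
      (f := fun a : α => f (Sum.inl a)) hlt
    have hcard' : p ≤ (Finset.univ.filter fun a : α => f (Sum.inl a) = c).card := by
      omega
    obtain ⟨T, hTsub, hTcard⟩ := Finset.exists_subset_card_eq hcard'
    refine ⟨Sum.inr ⟨T, hTcard⟩, ?_, ?_⟩
    · rw [samplingGraph_degree_inr]
    · intro u hu w hw
      rw [samplingGraph_neighborFinset] at hu hw
      simp only [Finset.mem_image] at hu hw
      obtain ⟨a, ha, rfl⟩ := hu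
      obtain ⟨b, hb, rfl⟩ := hw
      have := Finset.mem_filter.mp (hTsub ha)
      have := Finset.mem_filter.mp (hTsub hb)
      simp_all
  refine ⟨main, ?_⟩
  rintro ⟨f, -, hnd⟩
  obtain ⟨v, hdeg, hsame⟩ := main f
  have h2 := hnd v hdeg
  -- neighbor set nonempty since degree ≥ p ≥ 2 > 0
  have hne : ((samplingGraph α p).neighborFinset v).Nonempty := by
    rw [← Finset.card_pos, ← SimpleGraph.degree]
    omega
  obtain ⟨u, hu⟩ := hne
  have : ((samplingGraph α p).neighborFinset v).image f ⊆ {f u} := by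
    intro x hx
    simp only [Finset.mem_image] at hx
    obtain ⟨w, hw, rfl⟩ := hx
    simp [hsame w hw u hu]
  have := Finset.card_le_card this
  simp at this
  omega
end

section
/- Let there be given a graph F with V(F) = S₁ ∪ S₂ where S₁ and S₂ are disjoint, such that every vertex of S₂ has degree at most D in F, and suppose there is a vertex v ∈ S₁ such that the induced subgraph F[S₂ ∪ {v}] is connected, deg_F(v) < D, and v is adjacent in F to all other vertices of S₁. Then every proper D-coloring of the induced subgraph F[S₁] can be extended to a proper D-coloring of F that agrees with the given coloring on S₁. -/
open Finset

/-- Greedy list-coloring lemma: given a "descent" function `dd` so that every vertex of `S₂`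
has a neighbor (in `S₂` or equal to `v`) of strictly smaller `dd`-value, we can color `S₂`
so that each `x ∈ S₂` avoids the `f₁`-colors of its neighbors in `S₁ \ {v}` and neighboring
vertices of `S₂` get distinct colors. -/
private lemma greedy_aux {V : Type*} [Fintype V] [DecidableEq V]
    (F : SimpleGraph V) [DecidableRel F.Adj] (D : ℕ)
    (S₁ S₂ : Finset V) (hdisj : Disjoint S₁ S₂)
    (hS₂deg : ∀ u ∈ S₂, F.degree u ≤ D)
    (v : V) (hvS₂ : v ∉ S₂) (f₁ : V → Fin D) (dd : V → ℕ)
    (hdesc : ∀ u ∈ S₂, ∃ y, F.Adj u y ∧ (y = v ∨ y ∈ S₂) ∧ dd y < dd u) :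
    ∃ g : V → Fin D,
      (∀ x ∈ S₂, g x ∉ ((S₁.erase v).filter (fun w => F.Adj x w)).image f₁) ∧
      (∀ x ∈ S₂, ∀ y ∈ S₂, F.Adj x y → g x ≠ g y) := by
  suffices h : ∀ T : Finset V, T ⊆ S₂ →
      (∀ w ∈ S₂, w ∉ T → ∀ u ∈ T, dd u ≤ dd w) →
      ∀ g : V → Fin D,
        (∀ x ∈ S₂, x ∉ T → g x ∉ ((S₁.erase v).filter (fun w => F.Adj x w)).image f₁) →
        (∀ x ∈ S₂, x ∉ T → ∀ y ∈ S₂, y ∉ T → F.Adj x y → g x ≠ g y) →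
        ∃ g' : V → Fin D,
          (∀ x ∈ S₂, g' x ∉ ((S₁.erase v).filter (fun w => F.Adj x w)).image f₁) ∧
          (∀ x ∈ S₂, ∀ y ∈ S₂, F.Adj x y → g' x ≠ g' y) by
    exact h S₂ le_rfl (fun w hw hw' => absurd hw hw') (fun _ => f₁ v)
      (fun x hx hx' => absurd hx hx') (fun x hx hx' => absurd hx hx')
  intro T
  induction T using Finset.strongInduction with
  | _ T ih =>
    intro hT hinv g hg1 hg2
    rcases T.eq_empty_or_nonempty with rfl | hne
    · exact ⟨g, fun x hx => hg1 x hx (notMem_empty x),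
        fun x hx y hy hadj => hg2 x hx (notMem_empty x) y hy (notMem_empty y) hadj⟩
    · obtain ⟨u, huT, hmax⟩ := T.exists_max_image dd hne
      have huS₂ : u ∈ S₂ := hT huT
      obtain ⟨y, hadj_uy, hy_or, hy_lt⟩ := hdesc u huS₂
      set B₁ : Finset V := (S₁.erase v).filter (fun w => F.Adj u w) with hB₁def
      set CN : Finset V := (S₂ \ T).filter (fun w => F.Adj u w) with hCNdef
      have hyB₁ : y ∉ B₁ := by
        rcases hy_or with rfl | hyS₂
        · simp [hB₁def]
        · intro hmem
          have : y ∈ S₁ := (Finset.erase_subset _ _) (Finset.mem_filter.mp hmem).1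
          exact (Finset.disjoint_left.mp hdisj this) hyS₂
      have hyCN : y ∉ CN := by
        rcases hy_or with rfl | hyS₂
        · intro hmem
          exact hvS₂ (Finset.mem_sdiff.mp (Finset.mem_filter.mp hmem).1).1
        · intro hmem
          have hyT : y ∉ T := (Finset.mem_sdiff.mp (Finset.mem_filter.mp hmem).1).2
          exact absurd (hinv y hyS₂ hyT u huT) (not_le.mpr hy_lt)
      have hdisjBC : Disjoint B₁ CN := by
        apply Finset.disjoint_left.mpr
        intro a haB haC
        have ha1 : a ∈ S₁ := (Finset.erase_subset _ _) (Finset.mem_filter.mp haB).1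
        have ha2 : a ∈ S₂ := (Finset.mem_sdiff.mp (Finset.mem_filter.mp haC).1).1
        exact (Finset.disjoint_left.mp hdisj ha1) ha2
      have hsub : insert y (B₁ ∪ CN) ⊆ F.neighborFinset u := by
        intro a ha
        rw [SimpleGraph.mem_neighborFinset]
        rcases Finset.mem_insert.mp ha with rfl | ha'
        · exact hadj_uy
        · rcases Finset.mem_union.mp ha' with h' | h'
          · exact (Finset.mem_filter.mp h').2
          · exact (Finset.mem_filter.mp h').2
      have hcard : B₁.card + CN.card + 1 ≤ D := by
        have h1 : (insert y (B₁ ∪ CN)).card ≤ F.degree u := by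
          rw [SimpleGraph.degree]
          exact Finset.card_le_card hsub
        have h2 : (insert y (B₁ ∪ CN)).card = B₁.card + CN.card + 1 := by
          rw [Finset.card_insert_of_notMem (by
            intro hmem
            rcases Finset.mem_union.mp hmem with h' | h'
            exacts [hyB₁ h', hyCN h']),
            Finset.card_union_of_disjoint hdisjBC]
        have hdeg := hS₂deg u huS₂
        omega
      -- choose color
      have hnon : ((Finset.univ \ B₁.image f₁) \ CN.image g).Nonempty := by
        rw [← Finset.card_pos]
        have c1 : (B₁.image f₁).card ≤ B₁.card := Finset.card_image_le
        have c2 : (CN.image g).card ≤ CN.card := Finset.card_image_le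
        have c3 : (Finset.univ \ B₁.image f₁).card
            = D - (B₁.image f₁).card := by
          rw [Finset.card_sdiff_of_subset (Finset.subset_univ _), Finset.card_univ, Fintype.card_fin]
        have c4 := Finset.le_card_sdiff (CN.image g) (Finset.univ \ B₁.image f₁)
        have hdeg := hS₂deg u huS₂
        omega
      obtain ⟨c, hc⟩ := hnon
      have hc1 : c ∉ B₁.image f₁ := fun h =>
        (Finset.mem_sdiff.mp (Finset.mem_sdiff.mp hc).1).2 h
      have hc2 : c ∉ CN.image g := (Finset.mem_sdiff.mp hc).2
      -- recurse
      have hstep := ih (T.erase u) (Finset.erase_ssubset huT)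
        ((Finset.erase_subset _ _).trans hT)
        (by -- invariant
          intro w hwS₂ hwT' u' hu'
          have hu'T : u' ∈ T := Finset.mem_of_mem_erase hu'
          by_cases hwT : w ∈ T
          · have : w = u := by
              by_contra hne'
              exact hwT' (Finset.mem_erase.mpr ⟨hne', hwT⟩)
            subst this
            exact hmax u' hu'T
          · exact hinv w hwS₂ hwT u' hu'T)
        (Function.update g u c)
        (by -- list condition
          intro x hxS₂ hxT'
          by_cases hxu : x = u
          · rw [hxu, Function.update_self]
            exact hc1
          · rw [Function.update_of_ne hxu]
            exact hg1 x hxS₂ (fun hxT => hxT' (Finset.mem_erase.mpr ⟨hxu, hxT⟩)))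
        (by -- properness on colored part
          intro x hxS₂ hxT' z hzS₂ hzT' hadj
          by_cases hxu : x = u
          · have hzu : z ≠ u := fun h => hadj.ne (hxu.trans h.symm)
            rw [hxu, Function.update_self, Function.update_of_ne hzu]
            intro hEq
            apply hc2
            have hzT : z ∉ T := fun hzT => hzT' (Finset.mem_erase.mpr ⟨hzu, hzT⟩)
            have hzCN : z ∈ CN := Finset.mem_filter.mpr
              ⟨Finset.mem_sdiff.mpr ⟨hzS₂, hzT⟩, hxu ▸ hadj⟩
            exact hEq ▸ Finset.mem_image_of_mem g hzCN
          · by_cases hzu : z = u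
            · rw [hzu, Function.update_self, Function.update_of_ne hxu]
              intro hEq
              apply hc2
              have hxT : x ∉ T := fun hxT => hxT' (Finset.mem_erase.mpr ⟨hxu, hxT⟩)
              have hxCN : x ∈ CN := Finset.mem_filter.mpr
                ⟨Finset.mem_sdiff.mpr ⟨hxS₂, hxT⟩, hzu ▸ hadj.symm⟩
              exact hEq.symm ▸ Finset.mem_image_of_mem g hxCN
            · rw [Function.update_of_ne hxu, Function.update_of_ne hzu]
              exact hg2 x hxS₂ (fun hxT => hxT' (Finset.mem_erase.mpr ⟨hxu, hxT⟩))
                z hzS₂ (fun hzT => hzT' (Finset.mem_erase.mpr ⟨hzu, hzT⟩)) hadj)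
      obtain ⟨g', hg'1, hg'2⟩ := hstep
      exact ⟨g', hg'1, hg'2⟩

/-- **Proposition 7.** Let `F` be a graph with `V(F) = S₁ ∪ S₂` (disjoint),
every vertex of `S₂` of degree at most `D` in `F`, and suppose some `v ∈ S₁` is such that
`F[S₂ ∪ {v}]` is connected, `deg_F(v) < D`, and `v` is adjacent to all other vertices of `S₁`.
Then every proper `D`-coloring of `F[S₁]` can be extended to a proper `D`-coloring of `F`
agreeing with it on `S₁`. -/
theorem extend_coloring_through_cut_vertex {V : Type*} [Fintype V] [DecidableEq V]
    (F : SimpleGraph V) [DecidableRel F.Adj] (D : ℕ)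
    (S₁ S₂ : Finset V) (hdisj : Disjoint S₁ S₂) (hcover : S₁ ∪ S₂ = Finset.univ)
    (hS₂deg : ∀ u ∈ S₂, F.degree u ≤ D)
    (v : V) (hv : v ∈ S₁)
    (hconn : (F.induce ((↑S₂ : Set V) ∪ {v})).Connected)
    (hvdeg : F.degree v < D)
    (hvadj : ∀ u ∈ S₁, u ≠ v → F.Adj v u)
    (f₁ : V → Fin D)
    (hf₁ : ∀ x ∈ S₁, ∀ y ∈ S₁, F.Adj x y → f₁ x ≠ f₁ y) :
    ∃ f : V → Fin D,
      (∀ x y : V, F.Adj x y → f x ≠ f y) ∧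
      (∀ x ∈ S₁, f x = f₁ x) := by
  classical
  set s : Set V := (↑S₂ : Set V) ∪ {v} with hs_def
  have hvs : v ∈ s := Or.inr rfl
  have hvS₂ : v ∉ S₂ := fun h => (Finset.disjoint_left.mp hdisj hv) h
  set G : SimpleGraph ↥s := F.induce s with hG_def
  set vS : ↥s := ⟨v, hvs⟩ with hvS_def
  set dd : V → ℕ := fun x => if h : x ∈ s then G.dist ⟨x, h⟩ vS else 0 with hdd_def
  -- descent property
  have hdesc : ∀ u ∈ S₂, ∃ y, F.Adj u y ∧ (y = v ∨ y ∈ S₂) ∧ dd y < dd u := by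
    intro u huS₂
    have hus : u ∈ s := Or.inl huS₂
    have hune : u ≠ v := fun h => hvS₂ (h ▸ huS₂)
    have huneS : (⟨u, hus⟩ : ↥s) ≠ vS := fun h => hune (congrArg Subtype.val h)
    obtain ⟨p, hp⟩ := hconn.exists_walk_length_eq_dist ⟨u, hus⟩ vS
    have hdistpos : 0 < G.dist ⟨u, hus⟩ vS := hconn.pos_dist_of_ne huneS
    obtain ⟨yS, hadjS, q, rfl⟩ := SimpleGraph.Walk.exists_eq_cons_of_ne huneS p
    refine ⟨yS.val, ?_, ?_, ?_⟩
    · exact hadjS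
    · rcases yS.2 with h | h
      · exact Or.inr h
      · exact Or.inl h
    · have h1 : G.dist yS vS ≤ q.length := SimpleGraph.dist_le q
      have h2 : q.length + 1 = G.dist ⟨u, hus⟩ vS := by
        rw [← hp, SimpleGraph.Walk.length_cons]
      have hy : dd yS.val = G.dist yS vS := by
        simp only [hdd_def, dif_pos yS.2, Subtype.coe_eta]
      have hu : dd u = G.dist ⟨u, hus⟩ vS := by
        simp only [hdd_def, dif_pos hus]
      omega
  obtain ⟨g, hg1, hg2⟩ := greedy_aux F D S₁ S₂ hdisj hS₂deg v hvS₂ f₁ dd hdesc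
  -- choose a color for v
  have hvnon : ((Finset.univ \ (S₁.erase v).image f₁)
      \ (S₂.filter (fun w => F.Adj v w)).image g).Nonempty := by
    rw [← Finset.card_pos]
    have hsubv : (S₁.erase v) ∪ S₂.filter (fun w => F.Adj v w) ⊆ F.neighborFinset v := by
      intro a ha
      rw [SimpleGraph.mem_neighborFinset]
      rcases Finset.mem_union.mp ha with h | h
      · exact hvadj a (Finset.mem_of_mem_erase h) (Finset.ne_of_mem_erase h)
      · exact (Finset.mem_filter.mp h).2
    have hdisjv : Disjoint (S₁.erase v) (S₂.filter (fun w => F.Adj v w)) := by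
      apply Finset.disjoint_left.mpr
      intro a ha ha'
      exact (Finset.disjoint_left.mp hdisj ((Finset.erase_subset _ _) ha))
        ((Finset.filter_subset _ _) ha')
    have hcardv : (S₁.erase v).card + (S₂.filter (fun w => F.Adj v w)).card ≤ F.degree v := by
      rw [← Finset.card_union_of_disjoint hdisjv, SimpleGraph.degree]
      exact Finset.card_le_card hsubv
    have c1 : ((S₁.erase v).image f₁).card ≤ (S₁.erase v).card := Finset.card_image_le
    have c2 : ((S₂.filter (fun w => F.Adj v w)).image g).card
        ≤ (S₂.filter (fun w => F.Adj v w)).card := Finset.card_image_le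
    have c3 : (Finset.univ \ (S₁.erase v).image f₁).card
        = D - ((S₁.erase v).image f₁).card := by
      rw [Finset.card_sdiff_of_subset (Finset.subset_univ _), Finset.card_univ, Fintype.card_fin]
    have c4 := Finset.le_card_sdiff ((S₂.filter (fun w => F.Adj v w)).image g)
      (Finset.univ \ (S₁.erase v).image f₁)
    omega
  obtain ⟨cv, hcv⟩ := hvnon
  have hcv1 : cv ∉ (S₁.erase v).image f₁ := (Finset.mem_sdiff.mp (Finset.mem_sdiff.mp hcv).1).2
  have hcv2 : cv ∉ (S₂.filter (fun w => F.Adj v w)).image g := (Finset.mem_sdiff.mp hcv).2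
  set σ : Equiv.Perm (Fin D) := Equiv.swap (f₁ v) cv with hσ_def
  set f : V → Fin D := fun x => if x ∈ S₁ then f₁ x else σ (g x) with hf_def
  have hmemS₂ : ∀ x : V, x ∉ S₁ → x ∈ S₂ := by
    intro x hx
    have : x ∈ S₁ ∪ S₂ := hcover ▸ Finset.mem_univ x
    rcases Finset.mem_union.mp this with h | h
    · exact absurd h hx
    · exact h
  -- key mixed-edge lemma
  have key : ∀ a ∈ S₂, ∀ b ∈ S₁, F.Adj a b → σ (g a) ≠ f₁ b := by
    intro a ha b hb hadj
    by_cases hbv : b = v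
    · rw [hbv]
      intro hEq
      have h1 : σ cv = f₁ v := Equiv.swap_apply_right _ _
      have h2 : g a = cv := σ.injective (hEq.trans h1.symm)
      apply hcv2
      rw [← h2]
      exact Finset.mem_image_of_mem g (Finset.mem_filter.mpr ⟨ha, (hbv ▸ hadj).symm⟩)
    · have hbe : b ∈ S₁.erase v := Finset.mem_erase.mpr ⟨hbv, hb⟩
      have hga : g a ≠ f₁ b := by
        intro hEq
        apply hg1 a ha
        rw [hEq]
        exact Finset.mem_image_of_mem f₁ (Finset.mem_filter.mpr ⟨hbe, hadj⟩)
      have hfb_ne_c₀ : f₁ b ≠ f₁ v := by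
        have := hf₁ v hv b hb (hvadj b hb hbv)
        exact fun h => this h.symm
      have hfb_ne_cv : f₁ b ≠ cv := by
        intro h
        exact hcv1 (h ▸ Finset.mem_image_of_mem f₁ hbe)
      by_cases h1 : g a = f₁ v
      · rw [h1, Equiv.swap_apply_left]
        exact fun h => hfb_ne_cv h.symm
      · by_cases h2 : g a = cv
        · rw [h2, Equiv.swap_apply_right]
          exact fun h => hfb_ne_c₀ h.symm
        · rw [Equiv.swap_apply_of_ne_of_ne h1 h2]
          exact hga
  refine ⟨f, ?_, ?_⟩
  · intro x y hadj
    by_cases hx : x ∈ S₁ <;> by_cases hy : y ∈ S₁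
    · simpa [hf_def, hx, hy] using hf₁ x hx y hy hadj
    · have hyS₂ : y ∈ S₂ := hmemS₂ y hy
      have := key y hyS₂ x hx hadj.symm
      simp only [hf_def, if_pos hx, if_neg hy]
      exact fun h => this h.symm
    · have hxS₂ : x ∈ S₂ := hmemS₂ x hx
      simp only [hf_def, if_neg hx, if_pos hy]
      exact key x hxS₂ y hy hadj
    · have hxS₂ : x ∈ S₂ := hmemS₂ x hx
      have hyS₂ : y ∈ S₂ := hmemS₂ y hy
      simp only [hf_def, if_neg hx, if_neg hy]
      intro h
      exact hg2 x hxS₂ y hyS₂ hadj (σ.injective h)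
  · intro x hx
    simp [hf_def, hx]
end

section
/- Let q ≥ 4 and d = q³ + 2q² − q − 8. Let H be a finite simple graph on the disjoint union of nonempty vertex sets A and B in which A is an independent set and every vertex of A has at least d neighbors (all lying in B). Call a sampling a family λ = (S_u)_{u∈A} where each S_u is a q-element subset of the neighbors of u, and let Λ be the (nonempty) set of all samplings; for λ ∈ Λ let G̃_λ be the simple graph on B obtained from H[B] by adding, for each u ∈ A, all edges between distinct vertices of S_u. Then for every vertex w ∈ B, Σ_{λ∈Λ} deg_{G̃_λ}(w) ≤ |Λ| · ( deg_{H[B]}(w) + d_A(w)·q(q−1)/d ), where d_A(w) is the number of neighbors of w in A; in particular, since d > q(q²−1), this sum is at most |Λ| · ( deg_{H[B]}(w) + d_A(w)/(q+1) ). -/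
open scoped Classical

private lemma card_psc_filter_mem' {α : Type*} [DecidableEq α] (X : Finset α) (w : α)
    (hw : w ∈ X) (k : ℕ) :
    ((X.powersetCard (k+1)).filter fun S => w ∈ S).card = (X.card - 1).choose k := by
  rw [← Finset.card_erase_of_mem hw, ← Finset.card_powersetCard k (X.erase w)]
  refine Finset.card_nbij' (fun S => S.erase w) (fun T => insert w T) ?_ ?_ ?_ ?_
  · intro S hS
    simp only [Finset.mem_coe, Finset.mem_filter, Finset.mem_powersetCard] at hS
    rw [Finset.mem_coe, Finset.mem_powersetCard]
    exact ⟨Finset.erase_subset_erase w hS.1.1,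
      by rw [Finset.card_erase_of_mem hS.2, hS.1.2]; rfl⟩
  · intro T hT
    rw [Finset.mem_coe, Finset.mem_powersetCard] at hT
    have hwT : w ∉ T := fun h => (Finset.mem_erase.mp (hT.1 h)).1 rfl
    simp only [Finset.mem_coe, Finset.mem_filter, Finset.mem_powersetCard]
    refine ⟨⟨Finset.insert_subset hw (hT.1.trans (Finset.erase_subset w X)), ?_⟩,
      Finset.mem_insert_self w T⟩
    rw [Finset.card_insert_of_notMem hwT, hT.2]
  · intro S hS
    simp only [Finset.mem_coe, Finset.mem_filter] at hS
    exact Finset.insert_erase hS.2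
  · intro T hT
    rw [Finset.mem_coe, Finset.mem_powersetCard] at hT
    exact Finset.erase_insert fun h => (Finset.mem_erase.mp (hT.1 h)).1 rfl

/-- **Remark 8, expected degree bound.** Let `q ≥ 4`, `d = q³ + 2q² − q − 8`,
and let `H` be a graph on the disjoint union of nonempty sets `A` and `B` where `A` is
independent and every vertex of `A` has at least `d` neighbors. Summing over all samplings
`λ = (S_u)_{u∈A}` of `q`-element subsets of neighborhoods, the total degree of a fixed vertex
`w ∈ B` in the augmented graphs `G̃_λ` is at most
`|Λ|·(deg_{H[B]}(w) + d_A(w)·q(q−1)/d)`, and hence (since `d > q(q²−1)`) at most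
`|Λ|·(deg_{H[B]}(w) + d_A(w)/(q+1))`. -/
theorem average_augmented_degree_bound {V : Type*} [Fintype V] [DecidableEq V]
    (H : SimpleGraph V) [DecidableRel H.Adj]
    (q d : ℕ) (hq : 4 ≤ q) (hd : (d : ℤ) = q ^ 3 + 2 * q ^ 2 - q - 8)
    (A B : Finset V) (hdisj : Disjoint A B) (hcover : A ∪ B = Finset.univ)
    (hA : A.Nonempty) (hB : B.Nonempty)
    (hAindep : ∀ a ∈ A, ∀ b ∈ A, ¬ H.Adj a b)
    (hAdeg : ∀ a ∈ A, d ≤ H.degree a)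
    (w : V) (hw : w ∈ B) :
    let Λ : Finset (↥A → Finset V) :=
      Finset.univ.filter fun s =>
        ∀ u : ↥A, (s u).card = q ∧ s u ⊆ H.neighborFinset ↑u
    let tdeg : (↥A → Finset V) → ℕ := fun s =>
      (B.filter fun x => x ≠ w ∧ (H.Adj w x ∨ ∃ u : ↥A, w ∈ s u ∧ x ∈ s u)).card
    ((∑ s ∈ Λ, (tdeg s : ℚ)) ≤
      (Λ.card : ℚ) * (((H.neighborFinset w ∩ B).card : ℚ) +
        ((H.neighborFinset w ∩ A).card : ℚ) * (q : ℚ) * ((q : ℚ) - 1) / (d : ℚ))) ∧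
    ((∑ s ∈ Λ, (tdeg s : ℚ)) ≤
      (Λ.card : ℚ) * (((H.neighborFinset w ∩ B).card : ℚ) +
        ((H.neighborFinset w ∩ A).card : ℚ) / ((q : ℚ) + 1))) := by
  intro Λ tdeg
  -- basic numerics
  have hq4 : (4:ℤ) ≤ (q:ℤ) := by exact_mod_cast hq
  have hdge : (q:ℤ)^3 - (q:ℤ) ≤ (d:ℤ) := by rw [hd]; nlinarith
  have hqd : q ≤ d := by
    have : (q:ℤ) ≤ (d:ℤ) := by nlinarith
    exact_mod_cast this
  have hd0 : 0 < d := by omega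
  -- the product structure
  set T : ↥A → Finset (Finset V) := fun u => (H.neighborFinset ↑u).powersetCard q with hT
  have hΛ : Λ = Fintype.piFinset T := by
    ext s
    simp only [Λ, Finset.mem_filter, Finset.mem_univ, true_and, Fintype.mem_piFinset, hT,
      Finset.mem_powersetCard]
    exact forall_congr' fun u => and_comm
  have hΛmem : ∀ s ∈ Λ, ∀ u : ↥A, (s u).card = q ∧ s u ⊆ H.neighborFinset ↑u := by
    intro s hs u
    rw [hΛ, Fintype.mem_piFinset] at hs
    have := hs u
    rw [hT, Finset.mem_powersetCard] at this
    exact ⟨this.2, this.1⟩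
  -- per-u sampling count
  set cnt : ↥A → ℕ := fun u => (Λ.filter fun s => w ∈ s u).card with hcnt
  have hcnt0 : ∀ u : ↥A, w ∉ H.neighborFinset ↑u → cnt u = 0 := by
    intro u hu
    rw [hcnt]
    simp only [Finset.card_eq_zero, Finset.filter_eq_empty_iff]
    intro s hs hws
    exact hu ((hΛmem s hs u).2 hws)
  have hcntle : ∀ u : ↥A, w ∈ H.neighborFinset ↑u → d * cnt u ≤ q * Λ.card := by
    intro u hu
    obtain ⟨k, hk⟩ : ∃ k, q = k + 1 := ⟨q - 1, by omega⟩
    subst hk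
    set F : Finset (Finset V) := (T u).filter (fun S => w ∈ S) with hF
    have hfil : Λ.filter (fun s => w ∈ s u) = Fintype.piFinset (Function.update T u F) := by
      rw [Fintype.piFinset_update_eq_filter_piFinset_mem T u (Finset.filter_subset _ _), ← hΛ]
      apply Finset.filter_congr
      intro s hs
      rw [hΛ, Fintype.mem_piFinset] at hs
      simp [hF, Finset.mem_filter, hs u]
    set n : ℕ := (H.neighborFinset (↑u : V)).card with hn
    have hdn : d ≤ n := by
      rw [hn, SimpleGraph.card_neighborFinset_eq_degree]
      exact hAdeg ↑u u.2
    have hFcard : F.card = (n - 1).choose k := by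
      rw [hF, hT]; exact card_psc_filter_mem' _ _ hu k
    have hTcard : (T u).card = n.choose (k+1) := by
      rw [hT, Finset.card_powersetCard]
    set P : ℕ := ∏ x ∈ Finset.univ.erase u, (T x).card with hP
    have hc1 : (Λ.filter fun s => w ∈ s u).card = F.card * P := by
      rw [hfil, Fintype.card_piFinset]
      simp only [Function.apply_update (fun _ S => Finset.card S) T u F]
      rw [Finset.prod_update_of_mem (Finset.mem_univ u), Finset.sdiff_singleton_eq_erase]
    have hc2 : Λ.card = (T u).card * P := by
      rw [hΛ, Fintype.card_piFinset, ← Finset.mul_prod_erase _ _ (Finset.mem_univ u)]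
    rw [hcnt]
    simp only
    rw [hc1, hc2, ← Nat.mul_assoc, ← Nat.mul_assoc]
    gcongr ?_ * P
    rw [hFcard, hTcard]
    have hn1 : n - 1 + 1 = n := Nat.sub_add_cancel (hd0.trans_le hdn)
    have hid := Nat.add_one_mul_choose_eq (n-1) k
    rw [hn1] at hid
    calc d * (n-1).choose k ≤ n * (n-1).choose k := by gcongr
      _ = (k+1) * n.choose (k+1) := by rw [hid, Nat.mul_comm]
  -- pointwise degree bound
  have hpt : ∀ s ∈ Λ, tdeg s ≤ (H.neighborFinset w ∩ B).card +
      ∑ u : ↥A, (if w ∈ s u then q - 1 else 0) := by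
    intro s hs
    have hsub : (B.filter fun x => x ≠ w ∧ (H.Adj w x ∨ ∃ u : ↥A, w ∈ s u ∧ x ∈ s u)) ⊆
        (H.neighborFinset w ∩ B) ∪
          Finset.univ.biUnion (fun u : ↥A => if w ∈ s u then (s u).erase w else ∅) := by
      intro x hx
      simp only [Finset.mem_filter] at hx
      obtain ⟨hxB, hxw, hor⟩ := hx
      rcases hor with hadj | ⟨u, hwu, hxu⟩
      · exact Finset.mem_union_left _ (Finset.mem_inter.mpr
          ⟨(H.mem_neighborFinset w x).mpr hadj, hxB⟩)
      · refine Finset.mem_union_right _ (Finset.mem_biUnion.mpr ⟨u, Finset.mem_univ u, ?_⟩)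
        rw [if_pos hwu]
        exact Finset.mem_erase.mpr ⟨hxw, hxu⟩
    calc tdeg s ≤ ((H.neighborFinset w ∩ B) ∪
          Finset.univ.biUnion (fun u : ↥A => if w ∈ s u then (s u).erase w else ∅)).card :=
          Finset.card_le_card hsub
      _ ≤ (H.neighborFinset w ∩ B).card +
          (Finset.univ.biUnion (fun u : ↥A => if w ∈ s u then (s u).erase w else ∅)).card :=
          Finset.card_union_le _ _
      _ ≤ (H.neighborFinset w ∩ B).card + ∑ u : ↥A, (if w ∈ s u then q - 1 else 0) := by
          gcongr
          refine (Finset.card_biUnion_le).trans (Finset.sum_le_sum fun u _ => ?_)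
          split_ifs with h
          · rw [Finset.card_erase_of_mem h, (hΛmem s hs u).1]
          · simp
  -- main ℕ inequality
  have key : d * ∑ s ∈ Λ, tdeg s ≤
      Λ.card * (d * (H.neighborFinset w ∩ B).card +
        (H.neighborFinset w ∩ A).card * (q * (q - 1))) := by
    have step1 : d * ∑ s ∈ Λ, tdeg s ≤
        d * (Λ.card * (H.neighborFinset w ∩ B).card +
          ∑ s ∈ Λ, ∑ u : ↥A, (if w ∈ s u then q - 1 else 0)) := by
      gcongr d * ?_
      calc ∑ s ∈ Λ, tdeg s ≤ ∑ s ∈ Λ, ((H.neighborFinset w ∩ B).card +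
            ∑ u : ↥A, (if w ∈ s u then q - 1 else 0)) := Finset.sum_le_sum hpt
        _ = _ := by rw [Finset.sum_add_distrib, Finset.sum_const, smul_eq_mul]
    have step2 : ∑ s ∈ Λ, ∑ u : ↥A, (if w ∈ s u then q - 1 else 0) =
        ∑ u : ↥A, cnt u * (q - 1) := by
      rw [Finset.sum_comm]
      refine Finset.sum_congr rfl fun u _ => ?_
      rw [← Finset.sum_filter, Finset.sum_const, smul_eq_mul, hcnt]
    have step3 : ∑ u : ↥A, d * (cnt u * (q - 1)) ≤
        ∑ u : ↥A, (if w ∈ H.neighborFinset ↑u then q * Λ.card * (q-1) else 0) := by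
      refine Finset.sum_le_sum fun u _ => ?_
      by_cases h : w ∈ H.neighborFinset ↑u
      · rw [if_pos h, ← Nat.mul_assoc]
        exact Nat.mul_le_mul_right _ (hcntle u h)
      · rw [if_neg h, hcnt0 u h]; simp
    have step4 : ∑ u : ↥A, (if w ∈ H.neighborFinset ↑u then q * Λ.card * (q-1) else 0) =
        (H.neighborFinset w ∩ A).card * (q * Λ.card * (q-1)) := by
      rw [Finset.sum_coe_sort A (fun a => if w ∈ H.neighborFinset a then q * Λ.card * (q-1) else 0),
        ← Finset.sum_filter, Finset.sum_const, smul_eq_mul]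
      congr 1
      congr 1
      ext a
      simp only [Finset.mem_filter, Finset.mem_inter, SimpleGraph.mem_neighborFinset]
      rw [H.adj_comm]
      exact and_comm
    calc d * ∑ s ∈ Λ, tdeg s ≤ d * (Λ.card * (H.neighborFinset w ∩ B).card +
          ∑ s ∈ Λ, ∑ u : ↥A, (if w ∈ s u then q - 1 else 0)) := step1
      _ = d * (Λ.card * (H.neighborFinset w ∩ B).card) +
          ∑ u : ↥A, d * (cnt u * (q - 1)) := by
          rw [step2, Nat.mul_add, Finset.mul_sum]
      _ ≤ d * (Λ.card * (H.neighborFinset w ∩ B).card) +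
          (H.neighborFinset w ∩ A).card * (q * Λ.card * (q-1)) := by
          rw [← step4]; exact Nat.add_le_add_left (step3) _
      _ = Λ.card * (d * (H.neighborFinset w ∩ B).card +
          (H.neighborFinset w ∩ A).card * (q * (q - 1))) := by ring
  -- pass to ℚ
  have hd0Q : (0:ℚ) < (d:ℚ) := by exact_mod_cast hd0
  have h1q : (1:ℕ) ≤ q := by omega
  have keyQ : (d:ℚ) * ∑ s ∈ Λ, (tdeg s : ℚ) ≤
      (Λ.card:ℚ) * ((d:ℚ) * ((H.neighborFinset w ∩ B).card:ℚ) +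
        ((H.neighborFinset w ∩ A).card:ℚ) * ((q:ℚ) * ((q:ℚ) - 1))) := by
    have hcast : ((d * ∑ s ∈ Λ, tdeg s : ℕ) : ℚ) ≤
        ((Λ.card * (d * (H.neighborFinset w ∩ B).card +
          (H.neighborFinset w ∩ A).card * (q * (q - 1))) : ℕ) : ℚ) := Nat.cast_le.mpr key
    push_cast [Nat.cast_sub h1q] at hcast
    convert hcast using 2 <;> push_cast <;> ring
  have first : (∑ s ∈ Λ, (tdeg s : ℚ)) ≤
      (Λ.card : ℚ) * (((H.neighborFinset w ∩ B).card : ℚ) +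
        ((H.neighborFinset w ∩ A).card : ℚ) * (q : ℚ) * ((q : ℚ) - 1) / (d : ℚ)) := by
    have expand : (Λ.card : ℚ) * (((H.neighborFinset w ∩ B).card : ℚ) +
        ((H.neighborFinset w ∩ A).card : ℚ) * (q : ℚ) * ((q : ℚ) - 1) / (d : ℚ)) =
        (Λ.card : ℚ) * ((H.neighborFinset w ∩ B).card : ℚ) +
        ((Λ.card : ℚ) * (((H.neighborFinset w ∩ A).card : ℚ) * ((q : ℚ) * ((q : ℚ) - 1)))) / (d : ℚ) := by
      ring
    rw [expand, ← sub_le_iff_le_add', le_div_iff₀ hd0Q]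
    nlinarith [keyQ]
  refine ⟨first, le_trans first ?_⟩
  have hcA0 : (0:ℚ) ≤ ((H.neighborFinset w ∩ A).card : ℚ) := by positivity
  have hdgeQ : (q:ℚ)^3 - (q:ℚ) ≤ (d:ℚ) := by exact_mod_cast hdge
  have hqQ : (4:ℚ) ≤ (q:ℚ) := by exact_mod_cast hq
  have h2 : ((H.neighborFinset w ∩ A).card : ℚ) * (q : ℚ) * ((q : ℚ) - 1) / (d : ℚ) ≤
      ((H.neighborFinset w ∩ A).card : ℚ) / ((q : ℚ) + 1) := by
    rw [div_le_div_iff₀ hd0Q (by linarith)]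
    nlinarith [mul_le_mul_of_nonneg_left hdgeQ hcA0]
  gcongr
end
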